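/- Under the Veronese-type relations, for all natural numbers k₀ ≤ a and k with 1 ≤ k ≤ k₀ one has C(a, k₀−k) · P(k₀) · l₁^{k₀−k} · l₂^{a−(k₀−k)} = C(a, k₀) · P(k₀−k) · l₁^{k₀} · l₂^{a−k₀}. (Equation (2) of Lemma B.2.) -/
import Mathlib

private lemma ncancel {R : Type*} [CommRing R] [Algebra ℚ R] {n : ℕ} (hn : n ≠ 0)
    {x y : R} (h : (n : R) * x = (n : R) * y) : x = y := by
  have hq : (n : ℚ) ≠ 0 := by exact_mod_cast hn
  have h' : (n : ℚ) • x = (n : ℚ) • y := by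
    rw [Algebra.smul_def, Algebra.smul_def, map_natCast]
    exact h
  calc x = (n : ℚ)⁻¹ • ((n : ℚ) • x) := (inv_smul_smul₀ hq x).symm
    _ = (n : ℚ)⁻¹ • ((n : ℚ) • y) := by rw [h']
    _ = y := inv_smul_smul₀ hq y

private lemma stepL {R : Type*} [CommRing R] [Algebra ℚ R]
    (a : ℕ) (P : ℕ → R)
    (hV : ∀ k₀ k : ℕ, k₀ < a → 1 ≤ k → k ≤ a →
      ((a.choose (k₀ + 1) * a.choose (k - 1) : ℕ) : R) * (P k₀ * P k) =
        ((a.choose k₀ * a.choose k : ℕ) : R) * (P (k₀ + 1) * P (k - 1)))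
    (m : ℕ) (hm1 : 1 ≤ m) (hm2 : m ≤ a) :
    ((a.choose (m - 1) : ℕ) : R) * (P m * (∑ κ ∈ Finset.Icc 1 a, (κ : R) * P (a - κ))) =
      ((a.choose m : ℕ) : R) * (P (m - 1) * (∑ κ ∈ Finset.Icc 1 a, (κ : R) * P κ)) := by
  rw [Finset.mul_sum, Finset.mul_sum, Finset.mul_sum, Finset.mul_sum]
  -- reindex LHS by κ ↦ a + 1 - κ
  rw [Finset.sum_nbij' (i := fun κ : ℕ => a + 1 - κ) (j := fun κ : ℕ => a + 1 - κ)
    (f := fun κ : ℕ => ((a.choose (m-1) : ℕ) : R) * (P m * ((κ : R) * P (a - κ))))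
    (g := fun κ : ℕ => ((a.choose (m-1) : ℕ) : R) * (P m * (((a + 1 - κ : ℕ) : R) * P (κ - 1))))]
  · apply Finset.sum_congr rfl
    intro κ hκ
    simp only [Finset.mem_Icc] at hκ
    obtain ⟨hκ1, hκ2⟩ := hκ
    -- termwise equality
    have hVm := hV (m - 1) κ (by omega) hκ1 hκ2
    rw [Nat.sub_add_cancel hm1] at hVm
    have hc : (a + 1 - κ) * a.choose (κ - 1) = κ * a.choose κ := by
      have h2 := Nat.choose_succ_right_eq a (κ - 1)
      rw [Nat.sub_add_cancel hκ1] at h2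
      have h3 : a - (κ - 1) = a + 1 - κ := by omega
      rw [h3] at h2
      linarith [h2]
    have hcpos : a.choose (κ - 1) ≠ 0 := (Nat.choose_pos (show κ - 1 ≤ a by omega)).ne'
    apply ncancel hcpos
    have hcR : ((a + 1 - κ : ℕ) : R) * ((a.choose (κ - 1) : ℕ) : R)
        = ((κ : ℕ) : R) * ((a.choose κ : ℕ) : R) := by exact_mod_cast congrArg (Nat.cast : ℕ → R) hc
    push_cast at hVm ⊢
    linear_combination (((a.choose (m-1) : ℕ) : R) * (P m * P (κ - 1))) * hcR
      - (κ : R) * hVm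
  · intro κ hκ; simp only [Finset.mem_Icc] at *; omega
  · intro κ hκ; simp only [Finset.mem_Icc] at *; omega
  · intro κ hκ; simp only [Finset.mem_Icc] at hκ; omega
  · intro κ hκ; simp only [Finset.mem_Icc] at hκ; omega
  · intro κ hκ
    simp only [Finset.mem_Icc] at hκ
    obtain ⟨hκ1, hκ2⟩ := hκ
    rw [show a + 1 - (a + 1 - κ) = κ by omega, show a + 1 - κ - 1 = a - κ by omega]

private lemma chainG {R : Type*} [CommRing R] [Algebra ℚ R]
    (a : ℕ) (P : ℕ → R) (l₁ l₂ : R)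
    (hL : ∀ m : ℕ, 1 ≤ m → m ≤ a →
      ((a.choose (m - 1) : ℕ) : R) * (P m * l₂) = ((a.choose m : ℕ) : R) * (P (m - 1) * l₁)) :
    ∀ d m : ℕ, m + d ≤ a →
      ((a.choose m : ℕ) : R) * (P (m + d) * l₂ ^ d) =
        ((a.choose (m + d) : ℕ) : R) * (P m * l₁ ^ d) := by
  intro d
  induction d with
  | zero => intro m _; simp
  | succ d ih =>
    intro m hm
    have hIH := ih m (by omega)
    have hstep := hL (m + d + 1) (by omega) (by omega)
    rw [show m + d + 1 - 1 = m + d from rfl] at hstep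
    have hpos : a.choose (m + d) ≠ 0 := (Nat.choose_pos (by omega)).ne'
    apply ncancel hpos
    rw [show m + (d + 1) = m + d + 1 by ring]
    push_cast at hIH hstep ⊢
    linear_combination (((a.choose m : ℕ) : R) * l₂ ^ d) * hstep
      + (((a.choose (m + d + 1) : ℕ) : R) * l₁) * hIH

/-- Equation (2) of Lemma B.2: under the Veronese-type relations,
`C(a,k₀−k)·P(k₀)·l₁^{k₀−k}·l₂^{a−(k₀−k)} = C(a,k₀)·P(k₀−k)·l₁^{k₀}·l₂^{a−k₀}`. -/
theorem binary_tree_eq2 {R : Type*} [CommRing R] [Algebra ℚ R]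
    (a : ℕ) (ha : 1 ≤ a) (P : ℕ → R)
    (hV : ∀ k₀ k : ℕ, k₀ < a → 1 ≤ k → k ≤ a →
      ((a.choose (k₀ + 1) * a.choose (k - 1) : ℕ) : R) * (P k₀ * P k) =
        ((a.choose k₀ * a.choose k : ℕ) : R) * (P (k₀ + 1) * P (k - 1)))
    (k₀ : ℕ) (hk₀ : k₀ ≤ a) (k : ℕ) (hk1 : 1 ≤ k) (hk2 : k ≤ k₀) :
    ((a.choose (k₀ - k) : ℕ) : R) * P k₀ *
        (∑ κ ∈ Finset.Icc 1 a, (κ : R) * P κ) ^ (k₀ - k) *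
        (∑ κ ∈ Finset.Icc 1 a, (κ : R) * P (a - κ)) ^ (a - (k₀ - k)) =
      ((a.choose k₀ : ℕ) : R) * P (k₀ - k) *
        (∑ κ ∈ Finset.Icc 1 a, (κ : R) * P κ) ^ k₀ *
        (∑ κ ∈ Finset.Icc 1 a, (κ : R) * P (a - κ)) ^ (a - k₀) := by
  set l₁ := ∑ κ ∈ Finset.Icc 1 a, (κ : R) * P κ with hl₁
  set l₂ := ∑ κ ∈ Finset.Icc 1 a, (κ : R) * P (a - κ) with hl₂
  have hG := chainG a P l₁ l₂ (fun m hm1 hm2 => stepL a P hV m hm1 hm2) k (k₀ - k)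
    (by omega)
  rw [show k₀ - k + k = k₀ by omega] at hG
  rw [show a - (k₀ - k) = (a - k₀) + k by omega, pow_add]
  rw [show l₁ ^ k₀ = l₁ ^ (k₀ - k) * l₁ ^ k by rw [← pow_add]; congr 1; omega]
  linear_combination (l₁ ^ (k₀ - k) * l₂ ^ (a - k₀)) * hG
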